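/- Let T̂_n denote the monic Chebyshev polynomials of the first kind. Then for every n ≥ 2: (X² − 1)·D_q T̂_n = γ_n·(T̂_{n+1} − (1/4)·T̂_{n−1}) as polynomials in ℂ[X]. -/

import Mathlib

noncomputable section

/-- Real power `q ^ r` (with `q > 0` in applications), coerced into `ℂ`. -/
def rp (q : ℝ) (r : ℝ) : ℂ := ((q ^ r : ℝ) : ℂ)

/-- The lattice point `x(z) = (z + z⁻¹)/2`. -/
def xl (z : ℂ) : ℂ := (z + z⁻¹) / 2

/-- `x₊(z) = (q^{1/2} z + q^{-1/2} z⁻¹)/2`. -/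
def xp (q : ℝ) (z : ℂ) : ℂ := (rp q (1/2) * z + rp q (-(1/2)) * z⁻¹) / 2

/-- `x₋(z) = (q^{-1/2} z + q^{1/2} z⁻¹)/2`. -/
def xm (q : ℝ) (z : ℂ) : ℂ := (rp q (-(1/2)) * z + rp q (1/2) * z⁻¹) / 2

/-- `IsSq q f g` means `g = S_q f`, i.e. `g` satisfies the defining property of the
averaging operator applied to `f`. -/
def IsSq (q : ℝ) (f g : Polynomial ℂ) : Prop :=
  ∀ z : ℂ, z ≠ 0 → Polynomial.eval (xl z) g =
    (Polynomial.eval (xp q z) f + Polynomial.eval (xm q z) f) / 2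

/-- `IsDq q f g` means `g = D_q f`, i.e. `g` satisfies the defining property of the
Askey-Wilson operator applied to `f`. -/
def IsDq (q : ℝ) (f g : Polynomial ℂ) : Prop :=
  ∀ z : ℂ, z ≠ 0 → Polynomial.eval (xl z) g * (xp q z - xm q z) =
    Polynomial.eval (xp q z) f - Polynomial.eval (xm q z) f

/-- `α = (q^{1/2} + q^{-1/2})/2`. -/
def alphaC (q : ℝ) : ℂ := (rp q (1/2) + rp q (-(1/2))) / 2

/-- `α_n = (q^{n/2} + q^{-n/2})/2`. -/
def alphaN (q : ℝ) (n : ℕ) : ℂ := (rp q ((n : ℝ)/2) + rp q (-((n : ℝ)/2))) / 2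

/-- `γ_n = (q^{n/2} - q^{-n/2})/(q^{1/2} - q^{-1/2})`. -/
def gammaN (q : ℝ) (n : ℕ) : ℂ :=
  (rp q ((n : ℝ)/2) - rp q (-((n : ℝ)/2))) / (rp q (1/2) - rp q (-(1/2)))

/-- The monic Chebyshev polynomials of the first kind. -/
def chebM (n : ℕ) : Polynomial ℂ :=
  if n = 0 then 1 else (2 : ℂ) ^ (1 - (n : ℤ)) • Polynomial.Chebyshev.T ℂ (n : ℤ)

end


/-!
Substituting `x = (z + z⁻¹)/2` turns `x₊` and `x₋` into `x(sz)` and `x(s⁻¹z)` with `s = q^{1/2}`,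
and `T̂_n` into `(zⁿ + z⁻ⁿ)/2ⁿ`. The defining identity of `D_q T̂_n` then factors as
`D_q T̂_n(x) · (s - s⁻¹)(z - z⁻¹)/2 = (sⁿ - s⁻ⁿ)(zⁿ - z⁻ⁿ)/2ⁿ`, while
`x² - 1 = ((z - z⁻¹)/2)²` and `T̂_{n+1} - T̂_{n-1}/4 = (z - z⁻¹)(zⁿ - z⁻ⁿ)/2ⁿ⁺¹` for `n ≥ 2`.
Both sides therefore agree at every `x(z)`, and `x` maps `ℂ \ {0}` onto `ℂ`.
-/

open Polynomial

section Powers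

variable {q : ℝ}

lemma rp_neg (hq : 0 ≤ q) (r : ℝ) : rp q (-r) = (rp q r)⁻¹ := by
  simp [rp, Real.rpow_neg hq]

lemma rp_natCast_mul (hq : 0 ≤ q) (k : ℕ) (r : ℝ) : rp q (k * r) = rp q r ^ k := by
  simp [rp, mul_comm (k : ℝ), Real.rpow_mul_natCast hq]

lemma rp_half_ne_zero (hq : 0 < q) : rp q (1 / 2) ≠ 0 := by
  simpa [rp] using (Real.rpow_pos_of_pos hq _).ne'

lemma rp_half_sub_inv_ne_zero (hq0 : 0 < q) (hq1 : q ≠ 1) :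
    rp q (1 / 2) - (rp q (1 / 2))⁻¹ ≠ 0 := by
  have hsq : rp q (1 / 2) ^ 2 = q := by
    rw [← rp_natCast_mul hq0.le]
    norm_num [rp]
  have hs := rp_half_ne_zero hq0
  intro h
  field_simp at h
  have hq : (q : ℂ) = 1 := by rw [← hsq]; linear_combination h
  exact hq1 (mod_cast hq)

lemma gammaN_eq (hq : 0 ≤ q) (n : ℕ) :
    gammaN q n =
      (rp q (1 / 2) ^ n - (rp q (1 / 2))⁻¹ ^ n) / (rp q (1 / 2) - (rp q (1 / 2))⁻¹) := by
  have hn : (n : ℝ) / 2 = n * (1 / 2) := by ring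
  rw [gammaN, rp_neg hq, rp_neg hq, hn, rp_natCast_mul hq, inv_pow]

lemma xp_eq_xl (hq : 0 ≤ q) (z : ℂ) : xp q z = xl (rp q (1 / 2) * z) := by
  rw [xp, xl, rp_neg hq, mul_inv]

lemma xm_eq_xl (hq : 0 ≤ q) (z : ℂ) : xm q z = xl ((rp q (1 / 2))⁻¹ * z) := by
  rw [xm, xl, rp_neg hq, mul_inv, inv_inv]

lemma xp_sub_xm (hq : 0 ≤ q) (z : ℂ) :
    xp q z - xm q z = (rp q (1 / 2) - (rp q (1 / 2))⁻¹) * (z - z⁻¹) / 2 := by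
  rw [xp, xm, rp_neg hq]
  ring

end Powers

lemma exists_xl_eq (x : ℂ) : ∃ z ≠ 0, xl z = x := by
  obtain ⟨w, hw⟩ := IsAlgClosed.exists_eq_mul_self (x ^ 2 - 1)
  have hprod : (x + w) * (x - w) = 1 := by linear_combination hw
  refine ⟨x + w, left_ne_zero_of_mul_eq_one hprod, ?_⟩
  rw [xl, ← eq_inv_of_mul_eq_one_right hprod]
  ring

lemma eval_xl_sq_sub_one {z : ℂ} (hz : z ≠ 0) :
    (X ^ 2 - 1 : ℂ[X]).eval (xl z) = ((z - z⁻¹) / 2) ^ 2 := by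
  rw [eval_sub, eval_pow, eval_X, eval_one, xl]
  linear_combination mul_inv_cancel₀ hz

section Chebyshev

variable {z : ℂ}

lemma Polynomial.Chebyshev.T_eval_xl (hz : z ≠ 0) (n : ℕ) :
    (Chebyshev.T ℂ n).eval (xl z) = (z ^ n + z⁻¹ ^ n) / 2 := by
  rw [chebyshev_T_eq_dickson_one_one, eval_mul, eval_C, eval_comp, eval_mul, eval_X, eval_ofNat,
    xl, mul_div_cancel₀ _ two_ne_zero, dickson_one_one_eval_add_inv _ _ (mul_inv_cancel₀ hz)]
  simp [div_eq_inv_mul]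

lemma chebM_eval_xl {n : ℕ} (hn : n ≠ 0) (hz : z ≠ 0) :
    (chebM n).eval (xl z) = (z ^ n + z⁻¹ ^ n) / 2 ^ n := by
  rw [chebM, if_neg hn, smul_eq_C_mul, eval_mul, eval_C, Chebyshev.T_eval_xl hz,
    zpow_sub₀ two_ne_zero, zpow_one, zpow_natCast]
  field_simp

lemma chebM_succ_sub_chebM_pred_eval_xl {n : ℕ} (hn : 2 ≤ n) (hz : z ≠ 0) :
    (chebM (n + 1) - C (1 / 4 : ℂ) * chebM (n - 1)).eval (xl z) =
      (z - z⁻¹) * (z ^ n - z⁻¹ ^ n) / 2 ^ (n + 1) := by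
  obtain ⟨m, rfl⟩ : ∃ m, n = m + 1 := ⟨n - 1, by omega⟩
  rw [eval_sub, eval_mul, eval_C, chebM_eval_xl (by omega) hz, Nat.add_sub_cancel,
    chebM_eval_xl (by omega) hz]
  linear_combination (z ^ m + z⁻¹ ^ m) / 2 ^ (m + 2) * mul_inv_cancel₀ hz

end Chebyshev

lemma IsDq.eval_xl_chebM_mul {q : ℝ} (hq0 : 0 < q) (hq1 : q ≠ 1) {n : ℕ} (hn : n ≠ 0)
    {D : ℂ[X]} (hD : IsDq q (chebM n) D) {z : ℂ} (hz : z ≠ 0) :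
    D.eval (xl z) * (z - z⁻¹) = gammaN q n * 2 * (z ^ n - z⁻¹ ^ n) / 2 ^ n := by
  set s := rp q (1 / 2)
  have hs := rp_half_ne_zero hq0
  have hfactor : ((s * z) ^ n + (s * z)⁻¹ ^ n) - ((s⁻¹ * z) ^ n + (s⁻¹ * z)⁻¹ ^ n) =
      (s ^ n - s⁻¹ ^ n) * (z ^ n - z⁻¹ ^ n) := by
    simp only [mul_inv, inv_inv, mul_pow]
    ring
  have hDz := hD z hz
  rw [xp_sub_xm hq0.le, xp_eq_xl hq0.le, xm_eq_xl hq0.le, chebM_eval_xl hn (mul_ne_zero hs hz),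
    chebM_eval_xl hn (mul_ne_zero (inv_ne_zero hs) hz), ← sub_div, hfactor,
    eq_div_iff (pow_ne_zero _ two_ne_zero)] at hDz
  rw [gammaN_eq hq0.le, div_mul_eq_mul_div, div_mul_eq_mul_div, div_div,
    eq_div_iff (mul_ne_zero (rp_half_sub_inv_ne_zero hq0 hq1) (pow_ne_zero _ two_ne_zero))]
  linear_combination 2 * hDz

theorem stmt14 (q : ℝ) (hq0 : 0 < q) (hq1 : q < 1) :
    ∀ n : ℕ, 2 ≤ n → ∀ D : Polynomial ℂ, IsDq q (chebM n) D →
      (Polynomial.X ^ 2 - 1) * D =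
        Polynomial.C (gammaN q n) *
          (chebM (n + 1) - Polynomial.C (1/4 : ℂ) * chebM (n - 1)) := by
  intro n hn D hD
  refine Polynomial.funext fun x => ?_
  obtain ⟨z, hz, rfl⟩ := exists_xl_eq x
  have hDz := hD.eval_xl_chebM_mul hq0 hq1.ne (by omega) hz
  rw [eval_mul, eval_mul, eval_xl_sq_sub_one hz, eval_C, chebM_succ_sub_chebM_pred_eval_xl hn hz]
  linear_combination ((z - z⁻¹) / 4) * hDz
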